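/- arXiv:1209.5077 — 4 statements merged into one kernel-verified Lean document; each statement's English description precedes it below -/
import Mathlib

section
/- Let s ∈ ℂ be such that both sI − A and sI − A' are invertible (as complex matrices). Then sI − Ã is invertible and C̃ (sI − Ã)⁻¹ B̃ + D̃ = (C (sI − A)⁻¹ B + D) − (C' (sI − A')⁻¹ B' + D'); that is, the transfer function of the augmented system (Ã, B̃, C̃, D̃) equals the difference G(s) − G'(s) of the transfer functions of the original and reduced systems. -/
/-!
Since `Ã` is block diagonal, so is `sI - Ã`, and its inverse is the block-diagonal matrix of
`(sI - A)⁻¹` and `(sI - A')⁻¹`. Multiplying out the block row `[C, -C']` against it and the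
block column `[B; B']` leaves `C (sI - A)⁻¹ B - C' (sI - A')⁻¹ B'`.
-/

open Matrix

namespace Matrix

variable {R : Type*} [CommRing R] {ι ι' μ κ : Type*} [DecidableEq ι] [DecidableEq ι']

noncomputable def transferFunction [Fintype ι] (A : Matrix ι ι R) (B : Matrix ι μ R)
    (C : Matrix κ ι R) (D : Matrix κ μ R) (s : R) : Matrix κ μ R :=
  C * (s • 1 - A)⁻¹ * B + D

theorem smul_one_sub_fromBlocks_diag (s : R) (A : Matrix ι ι R) (A' : Matrix ι' ι' R) :
    s • (1 : Matrix (ι ⊕ ι') (ι ⊕ ι') R) - fromBlocks A 0 0 A'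
      = fromBlocks (s • 1 - A) 0 0 (s • 1 - A') := by
  rw [← fromBlocks_one, fromBlocks_smul, sub_eq_add_neg, fromBlocks_neg, fromBlocks_add]
  simp [sub_eq_add_neg]

theorem inv_fromBlocks_diag [Fintype ι] [Fintype ι'] {M : Matrix ι ι R} {M' : Matrix ι' ι' R}
    (hM : IsUnit M) (hM' : IsUnit M') :
    (fromBlocks M 0 0 M')⁻¹ = fromBlocks M⁻¹ 0 0 M'⁻¹ := by
  rw [inv_fromBlocks_zero₂₁_of_isUnit_iff M 0 M' (iff_of_true hM hM')]
  simp

theorem transferFunction_fromBlocks_diag [Fintype ι] [Fintype ι'] (A : Matrix ι ι R)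
    (B : Matrix ι μ R) (C : Matrix κ ι R) (D : Matrix κ μ R) (A' : Matrix ι' ι' R)
    (B' : Matrix ι' μ R) (C' : Matrix κ ι' R) (D' : Matrix κ μ R) {s : R}
    (hA : IsUnit (s • 1 - A)) (hA' : IsUnit (s • 1 - A')) :
    transferFunction (fromBlocks A 0 0 A') (fromRows B B') (fromCols C (-C')) (D - D') s
      = transferFunction A B C D s - transferFunction A' B' C' D' s := by
  simp only [transferFunction, smul_one_sub_fromBlocks_diag, inv_fromBlocks_diag hA hA',
    fromCols_mul_fromBlocks, fromCols_mul_fromRows, Matrix.mul_zero, add_zero, zero_add,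
    Matrix.neg_mul]
  abel

end Matrix

/-- The transfer function of the augmented (error) system equals the difference of the
transfer functions of the original and reduced systems: if both `sI − A` and `sI − A'`
are invertible, then `sI − Ã` is invertible and
`C̃ (sI − Ã)⁻¹ B̃ + D̃ = (C (sI − A)⁻¹ B + D) − (C' (sI − A')⁻¹ B' + D')`. -/
theorem augmented_transfer_function_eq_difference {n n' m o : ℕ}
    (A : Matrix (Fin n) (Fin n) ℝ) (B : Matrix (Fin n) (Fin m) ℝ)
    (C : Matrix (Fin o) (Fin n) ℝ) (D : Matrix (Fin o) (Fin m) ℝ)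
    (A' : Matrix (Fin n') (Fin n') ℝ) (B' : Matrix (Fin n') (Fin m) ℝ)
    (C' : Matrix (Fin o) (Fin n') ℝ) (D' : Matrix (Fin o) (Fin m) ℝ)
    (Atil : Matrix (Fin n ⊕ Fin n') (Fin n ⊕ Fin n') ℝ)
    (Btil : Matrix (Fin n ⊕ Fin n') (Fin m) ℝ)
    (Ctil : Matrix (Fin o) (Fin n ⊕ Fin n') ℝ)
    (Dtil : Matrix (Fin o) (Fin m) ℝ)
    (hA : Atil = fromBlocks A 0 0 A') (hB : Btil = fromRows B B')
    (hC : Ctil = fromCols C (-C')) (hD : Dtil = D - D')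
    (s : ℂ)
    (hinv : IsUnit (s • (1 : Matrix (Fin n) (Fin n) ℂ) - A.map (Complex.ofReal ·)))
    (hinv' : IsUnit (s • (1 : Matrix (Fin n') (Fin n') ℂ) - A'.map (Complex.ofReal ·))) :
    IsUnit (s • (1 : Matrix (Fin n ⊕ Fin n') (Fin n ⊕ Fin n') ℂ)
        - Atil.map (Complex.ofReal ·)) ∧
    (Ctil.map (Complex.ofReal ·)) *
        (s • (1 : Matrix (Fin n ⊕ Fin n') (Fin n ⊕ Fin n') ℂ)
          - Atil.map (Complex.ofReal ·))⁻¹ *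
        (Btil.map (Complex.ofReal ·)) + Dtil.map (Complex.ofReal ·)
      = ((C.map (Complex.ofReal ·)) *
            (s • (1 : Matrix (Fin n) (Fin n) ℂ) - A.map (Complex.ofReal ·))⁻¹ *
            (B.map (Complex.ofReal ·)) + D.map (Complex.ofReal ·))
        - ((C'.map (Complex.ofReal ·)) *
            (s • (1 : Matrix (Fin n') (Fin n') ℂ) - A'.map (Complex.ofReal ·))⁻¹ *
            (B'.map (Complex.ofReal ·)) + D'.map (Complex.ofReal ·)) := by
  subst hA hB hC hD
  simp only [fromBlocks_map, fromRows_map, fromCols_map, Matrix.map_neg _ Complex.ofReal_neg,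
    Matrix.map_sub _ Complex.ofReal_sub, Matrix.map_zero _ Complex.ofReal_zero]
  refine ⟨?_, transferFunction_fromBlocks_diag _ _ _ _ _ _ _ _ hinv hinv'⟩
  rw [smul_one_sub_fromBlocks_diag]
  exact isUnit_fromBlocks_zero₂₁.mpr ⟨hinv, hinv'⟩
end

section
/- Let A, P ∈ ℝ^{N×N} with P symmetric positive semidefinite, and let ε > 0. If AᵀP + PA + εI is negative semidefinite, then P is positive definite. -/
/-!
If `P x = 0`, both cross terms of `xᴴ (AᴴP + PA + εI) x` vanish, leaving `ε ‖x‖²`. Negative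
semidefiniteness then forces `x = 0`, so `P` has trivial kernel, and a positive semidefinite
matrix with trivial kernel is positive definite.
-/

open Matrix
open scoped ComplexOrder

namespace Matrix

variable {n : Type*} [Fintype n]

theorem IsHermitian.dotProduct_conjTranspose_mul_add_mul_mulVec_eq_zero {R : Type*}
    [CommRing R] [StarRing R] {P : Matrix n n R} (hP : P.IsHermitian) (A : Matrix n n R)
    {x : n → R} (hPx : P *ᵥ x = 0) :
    star x ⬝ᵥ ((Aᴴ * P + P * A) *ᵥ x) = 0 := by
  have hxP : star x ᵥ* P = 0 := by
    rw [← hP.eq, ← star_mulVec, hPx, star_zero]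
  rw [add_mulVec, dotProduct_add, ← mulVec_mulVec, ← mulVec_mulVec, hPx, mulVec_zero,
    dotProduct_mulVec, hxP, zero_dotProduct, dotProduct_zero, add_zero]

variable {𝕜 : Type*} [RCLike 𝕜]

theorem PosSemidef.posDef_of_mulVec_eq_zero {P : Matrix n n 𝕜} (hP : P.PosSemidef)
    (hker : ∀ x, P *ᵥ x = 0 → x = 0) : P.PosDef := by
  refine posDef_iff_dotProduct_mulVec.mpr ⟨hP.isHermitian, fun x hx => ?_⟩
  refine (hP.dotProduct_mulVec_nonneg x).lt_of_ne fun h0 => hx (hker x ?_)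
  exact (hP.dotProduct_mulVec_zero_iff x).mp h0.symm

theorem PosSemidef.posDef_of_lyapunov_ineq [DecidableEq n] {A P : Matrix n n 𝕜}
    (hP : P.PosSemidef) {ε : ℝ} (hε : 0 < ε) (h : (-(Aᴴ * P + P * A + ε • 1)).PosSemidef) :
    P.PosDef := by
  refine hP.posDef_of_mulVec_eq_zero fun x hPx => ?_
  by_contra hx
  have hquad : star x ⬝ᵥ (-(Aᴴ * P + P * A + ε • 1) *ᵥ x) = -(ε • (star x ⬝ᵥ x)) := by
    rw [neg_mulVec, dotProduct_neg, add_mulVec, dotProduct_add,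
      hP.isHermitian.dotProduct_conjTranspose_mul_add_mul_mulVec_eq_zero A hPx, smul_mulVec,
      one_mulVec, dotProduct_smul, zero_add]
  have hpos : 0 < ε • (star x ⬝ᵥ x) := smul_pos hε (dotProduct_star_self_pos_iff.mpr hx)
  have hnonpos := h.dotProduct_mulVec_nonneg x
  rw [hquad, neg_nonneg] at hnonpos
  exact not_le_of_gt hpos hnonpos

end Matrix

/-- If `P` is symmetric positive semidefinite, `ε > 0`, and `AᵀP + PA + εI` is negative
semidefinite, then `P` is positive definite. -/
theorem posDef_of_lyapunov_ineq {N : ℕ}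
    (A P : Matrix (Fin N) (Fin N) ℝ) (hP : P.PosSemidef)
    (ε : ℝ) (hε : 0 < ε)
    (h : (-(Aᵀ * P + P * A + ε • (1 : Matrix (Fin N) (Fin N) ℝ))).PosSemidef) :
    P.PosDef :=
  hP.posDef_of_lyapunov_ineq (A := A) hε (by rwa [conjTranspose_eq_transpose_of_trivial])
end

section
/- Let A, P ∈ ℝ^{N×N} with P symmetric positive definite. If AᵀP + PA is negative definite, then A is Hurwitz, i.e., every eigenvalue λ ∈ ℂ of A (viewed as a complex matrix) satisfies Re(λ) < 0. -/
open Matrix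

/-!
If `A v = μ v` with `v ≠ 0`, then `vᴴ (AᴴP + PA) v = 2 Re μ · vᴴ P v`; the left side has
negative real part and `vᴴ P v` is positive, so `Re μ < 0`. A real positive definite matrix stays
positive definite over `ℂ`, since its quadratic form at `x + i y` is the sum of its values at `x`
and at `y`.
-/

def IsHurwitz {n : Type*} [Fintype n] [DecidableEq n] (A : Matrix n n ℝ) : Prop :=
  ∀ μ ∈ spectrum ℂ (A.map (Complex.ofReal ·)), μ.re < 0

namespace Matrix

open ComplexOrder

variable {n : Type*} [Fintype n]

theorem exists_mulVec_eq_smul_of_mem_spectrum {K : Type*} [Field K] [DecidableEq n]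
    {A : Matrix n n K} {μ : K} (hμ : μ ∈ spectrum K A) : ∃ v ≠ 0, A *ᵥ v = μ • v := by
  rw [← spectrum_toLin', ← Module.End.hasEigenvalue_iff_mem_spectrum] at hμ
  obtain ⟨v, hv⟩ := hμ.exists_hasEigenvector
  exact ⟨v, hv.2, by simpa using hv.apply_eq_smul⟩

theorem star_dotProduct_conjTranspose_mul_add_mul_mulVec {R : Type*} [CommRing R] [StarRing R]
    {A : Matrix n n R} (P : Matrix n n R) {μ : R} {v : n → R} (hv : A *ᵥ v = μ • v) :
    star v ⬝ᵥ (Aᴴ * P + P * A) *ᵥ v = (star μ + μ) * (star v ⬝ᵥ P *ᵥ v) := by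
  rw [add_mulVec, dotProduct_add, ← mulVec_mulVec, ← mulVec_mulVec, dotProduct_mulVec,
    ← star_mulVec, hv, star_smul, smul_dotProduct, mulVec_smul, dotProduct_smul,
    smul_eq_mul, smul_eq_mul, add_mul]

theorem re_star_dotProduct_map_ofReal_mulVec (M : Matrix n n ℝ) (v : n → ℂ) :
    (star v ⬝ᵥ M.map Complex.ofReal *ᵥ v).re =
      (fun i ↦ (v i).re) ⬝ᵥ M *ᵥ (fun i ↦ (v i).re) +
        (fun i ↦ (v i).im) ⬝ᵥ M *ᵥ (fun i ↦ (v i).im) := by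
  simp only [dotProduct, mulVec, map_apply, Pi.star_apply, Complex.re_sum, Finset.mul_sum,
    ← Finset.sum_add_distrib]
  refine Finset.sum_congr rfl fun i _ ↦ Finset.sum_congr rfl fun j _ ↦ ?_
  simp [Complex.mul_re, Complex.mul_im]

theorem PosDef.map_ofReal {M : Matrix n n ℝ} (hM : M.PosDef) : (M.map Complex.ofReal).PosDef := by
  have hMc : (M.map Complex.ofReal).IsHermitian :=
    hM.isHermitian.map _ fun _ ↦ (Complex.conj_ofReal _).symm
  refine posDef_iff_dotProduct_mulVec.2 ⟨hMc, fun v hv ↦ Complex.pos_iff.2 ⟨?_, ?_⟩⟩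
  · rw [re_star_dotProduct_map_ofReal_mulVec]
    set x : n → ℝ := fun i ↦ (v i).re
    set y : n → ℝ := fun i ↦ (v i).im
    have hxy : x ≠ 0 ∨ y ≠ 0 := by
      by_contra! h
      exact hv (funext fun i ↦ Complex.ext (congrFun h.1 i) (congrFun h.2 i))
    have hpos {z : n → ℝ} (hz : z ≠ 0) : 0 < z ⬝ᵥ M *ᵥ z := by
      simpa using hM.dotProduct_mulVec_pos hz
    have hnonneg (z : n → ℝ) : 0 ≤ z ⬝ᵥ M *ᵥ z := by
      simpa using hM.posSemidef.dotProduct_mulVec_nonneg z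
    rcases hxy with hx | hy
    · exact add_pos_of_pos_of_nonneg (hpos hx) (hnonneg y)
    · exact add_pos_of_nonneg_of_pos (hnonneg x) (hpos hy)
  · exact (hMc.im_star_dotProduct_mulVec_self v).symm

theorem re_lt_zero_of_mem_spectrum_of_lyapunov {𝕜 : Type*} [RCLike 𝕜] [DecidableEq n]
    {A P : Matrix n n 𝕜} (hP : P.PosDef) (h : (-(Aᴴ * P + P * A)).PosDef) {μ : 𝕜}
    (hμ : μ ∈ spectrum 𝕜 A) : RCLike.re μ < 0 := by
  obtain ⟨v, hv0, hv⟩ := exists_mulVec_eq_smul_of_mem_spectrum hμ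
  have hc : 0 < RCLike.re (star v ⬝ᵥ P *ᵥ v) := hP.re_dotProduct_pos hv0
  have hc_im : RCLike.im (star v ⬝ᵥ P *ᵥ v) = 0 :=
    hP.isHermitian.im_star_dotProduct_mulVec_self v
  have hQ := h.re_dotProduct_pos hv0
  rw [neg_mulVec, dotProduct_neg, star_dotProduct_conjTranspose_mul_add_mul_mulVec P hv,
    map_neg, RCLike.mul_re, hc_im] at hQ
  simp only [map_add, RCLike.star_def, RCLike.conj_re, mul_zero, sub_zero] at hQ
  nlinarith

end Matrix

/-- Lyapunov's theorem: if `P` is symmetric positive definite and `AᵀP + PA` is negative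
definite, then `A` is Hurwitz. -/
theorem hurwitz_of_lyapunov {N : ℕ}
    (A P : Matrix (Fin N) (Fin N) ℝ) (hP : P.PosDef)
    (h : (-(Aᵀ * P + P * A)).PosDef) :
    IsHurwitz A := by
  intro μ hμ
  have hmap : (-(Aᵀ * P + P * A)).map Complex.ofReal = -((A.map Complex.ofReal)ᴴ *
      P.map Complex.ofReal + P.map Complex.ofReal * A.map Complex.ofReal) := by
    ext i j
    simp [mul_apply]
  exact re_lt_zero_of_mem_spectrum_of_lyapunov hP.map_ofReal (hmap ▸ h.map_ofReal) hμ
end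

section
/- Let γ > 0, let A ∈ ℝ^{N×N}, B ∈ ℝ^{N×m}, C ∈ ℝ^{o×N}, D ∈ ℝ^{o×m}, and let P ∈ ℝ^{N×N} be symmetric. If the symmetric block matrix [[P, AP, B, 0], [PAᵀ, P, 0, PCᵀ], [Bᵀ, 0, I_m, Dᵀ], [0, CP, D, γ²I_o]] is positive definite, then every eigenvalue of A (viewed as a complex matrix) has modulus strictly less than 1, and for every z ∈ ℂ with |z| = 1 the matrix zI − A is invertible and the spectral norm satisfies ‖C (zI − A)⁻¹ B + D‖ ≤ γ. -/
/-!
Eliminating `P` from the LMI by a test vector: if `A x + B w = z x`, `y = C x + D w`,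
`q = P⁻¹ x` and `c = -γ⁻²`, then `ξ = (-z q, q, w, c y)` satisfies
`ξᴴ M ξ = (1 - |z|²) xᴴ P⁻¹ x + ‖w‖² - ‖y‖² / γ²`, so positivity of `M` yields the dissipation
inequality `‖y‖² < γ² ((1 - |z|²) xᴴ P⁻¹ x + ‖w‖²)` for `(x, w) ≠ 0`. An eigenvector of `A`
(with `w = 0`) forces `|z| < 1`; for `|z| = 1` and `x = (z - A)⁻¹ B w` it gives `‖y‖ ≤ γ ‖w‖`.
-/

open Matrix

/-- The operator norm induced by the Euclidean norm (spectral norm) of a complex matrix. -/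
noncomputable def specNorm {m n : Type*} [Fintype m] [Fintype n] [DecidableEq n]
    (M : Matrix m n ℂ) : ℝ :=
  ‖(Matrix.toEuclideanLin M).toContinuousLinearMap‖

open scoped ComplexOrder

section OfReal

variable {n : Type*} [Fintype n]

theorem Matrix.re_star_dotProduct_map_ofReal_mulVec_s10 (M : Matrix n n ℝ) (x : n → ℂ) :
    (star x ⬝ᵥ M.map (↑) *ᵥ x).re =
      (fun i ↦ (x i).re) ⬝ᵥ M *ᵥ (fun i ↦ (x i).re) +
        (fun i ↦ (x i).im) ⬝ᵥ M *ᵥ (fun i ↦ (x i).im) := by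
  simp only [dotProduct, mulVec, map_apply, Pi.star_apply, Complex.re_sum, Finset.mul_sum,
    ← Finset.sum_add_distrib]
  refine Finset.sum_congr rfl fun i _ ↦ Finset.sum_congr rfl fun j _ ↦ ?_
  simp [Complex.mul_re, Complex.mul_im]

theorem Matrix.PosDef.map_ofReal_s10 {M : Matrix n n ℝ} (hM : M.PosDef) :
    (M.map ((↑) : ℝ → ℂ)).PosDef := by
  have hH : (M.map ((↑) : ℝ → ℂ)).IsHermitian :=
    hM.isHermitian.map _ fun r ↦ (Complex.conj_ofReal r).symm
  refine .of_dotProduct_mulVec_pos hH fun x hx ↦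
    Complex.pos_iff.mpr ⟨?_, (hH.im_star_dotProduct_mulVec_self x).symm⟩
  rw [re_star_dotProduct_map_ofReal_mulVec_s10]
  have hre := hM.posSemidef.dotProduct_mulVec_nonneg (fun i ↦ (x i).re)
  have him := hM.posSemidef.dotProduct_mulVec_nonneg (fun i ↦ (x i).im)
  simp only [star_trivial] at hre him
  by_cases h : (fun i ↦ (x i).re) = 0
  · have : (fun i ↦ (x i).im) ≠ 0 := fun h' ↦ hx <| funext fun i ↦
      Complex.ext (congrFun h i) (congrFun h' i)
    simpa using add_pos_of_nonneg_of_pos hre (by simpa using hM.dotProduct_mulVec_pos this)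
  · exact add_pos_of_pos_of_nonneg (by simpa using hM.dotProduct_mulVec_pos h) him

end OfReal

theorem Matrix.star_dotProduct_conjTranspose_mulVec {R k l : Type*} [CommSemiring R] [StarRing R]
    [Fintype k] [Fintype l] (M : Matrix l k R) (u : k → R) (v : l → R) :
    star u ⬝ᵥ Mᴴ *ᵥ v = star (M *ᵥ u) ⬝ᵥ v := by
  rw [dotProduct_mulVec, star_mulVec]

section BoundedRealLMI

variable {n m o : Type*} [Fintype n] [DecidableEq m] [DecidableEq o]

/-- Stated with `ᴴ` so that the real LMI and its complexification are both instances. -/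
def boundedRealLMI {R : Type*} [Semiring R] [StarRing R] (A : Matrix n n R) (B : Matrix n m R)
    (C : Matrix o n R) (D : Matrix o m R) (P : Matrix n n R) (s : R) :
    Matrix ((n ⊕ n) ⊕ (m ⊕ o)) ((n ⊕ n) ⊕ (m ⊕ o)) R :=
  fromBlocks (fromBlocks P (A * P) (P * Aᴴ) P) (fromBlocks B 0 0 (P * Cᴴ))
    (fromBlocks Bᴴ 0 0 (C * P)) (fromBlocks 1 Dᴴ D (s • 1))

theorem boundedRealLMI_map {R S : Type*} [Semiring R] [StarRing R] [Semiring S] [StarRing S]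
    (f : R →+* S) (hf : Function.Semiconj f star star) (A : Matrix n n R) (B : Matrix n m R)
    (C : Matrix o n R) (D : Matrix o m R) (P : Matrix n n R) (s : R) :
    (boundedRealLMI A B C D P s).map f =
      boundedRealLMI (A.map f) (B.map f) (C.map f) (D.map f) (P.map f) (f s) := by
  simp [boundedRealLMI, fromBlocks_map, Matrix.map_mul, conjTranspose_map f hf,
    smul_one_eq_diagonal]

theorem posDef_of_boundedRealLMI_posDef {R : Type*} [Ring R] [StarRing R] [PartialOrder R]
    {A : Matrix n n R} {B : Matrix n m R} {C : Matrix o n R} {D : Matrix o m R}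
    {P : Matrix n n R} {s : R} (h : (boundedRealLMI A B C D P s).PosDef) : P.PosDef :=
  h.submatrix (Sum.inl_injective.comp Sum.inl_injective)

variable [Fintype m] [Fintype o]

theorem star_dotProduct_boundedRealLMI_mulVec {R : Type*} [CommRing R] [StarRing R]
    {A : Matrix n n R} {B : Matrix n m R} {C : Matrix o n R} {D : Matrix o m R}
    {P : Matrix n n R} {s c z : R} {q x : n → R} {w : m → R} {y : o → R}
    (hP : Pᴴ = P) (hc : star c = c) (hx : P *ᵥ q = x)
    (hAB : A *ᵥ x + B *ᵥ w = z • x) (hy : C *ᵥ x + D *ᵥ w = y) :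
    star (Sum.elim (Sum.elim (-z • q) q) (Sum.elim w (c • y))) ⬝ᵥ
        boundedRealLMI A B C D P s *ᵥ Sum.elim (Sum.elim (-z • q) q) (Sum.elim w (c • y)) =
      (1 - star z * z) * (star x ⬝ᵥ q) + star w ⬝ᵥ w + (2 * c + s * c ^ 2) * (star y ⬝ᵥ y) := by
  have hPq : ∀ v, star q ⬝ᵥ P *ᵥ v = star x ⬝ᵥ v := fun v ↦ by
    rw [← hP, star_dotProduct_conjTranspose_mulVec, hx]
  simp only [boundedRealLMI, fromBlocks_mulVec, Function.star_sumElim, sumElim_dotProduct_sumElim,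
    Sum.elim_comp_inl, Sum.elim_comp_inr, ← mulVec_mulVec, hx, zero_mulVec, add_zero, zero_add,
    mulVec_smul, smul_mulVec, one_mulVec, dotProduct_add, dotProduct_smul, star_smul,
    smul_dotProduct, hPq, star_dotProduct_conjTranspose_mulVec, smul_eq_mul, hc, star_neg,
    dotProduct_zero, mul_zero]
  have hstate : star q ⬝ᵥ A *ᵥ x + star q ⬝ᵥ B *ᵥ w = z * (star q ⬝ᵥ x) := by
    rw [← dotProduct_add, hAB, dotProduct_smul, smul_eq_mul]
  have hstate' : star (A *ᵥ x) ⬝ᵥ q + star (B *ᵥ w) ⬝ᵥ q = star z * (star x ⬝ᵥ q) := by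
    rw [← add_dotProduct, ← star_add, hAB, star_smul, smul_dotProduct, smul_eq_mul]
  have houtput : star y ⬝ᵥ C *ᵥ x + star y ⬝ᵥ D *ᵥ w = star y ⬝ᵥ y := by
    rw [← dotProduct_add, hy]
  have houtput' : star (C *ᵥ x) ⬝ᵥ y + star (D *ᵥ w) ⬝ᵥ y = star y ⬝ᵥ y := by
    rw [← add_dotProduct, ← star_add, hy]
  have hsymm : star x ⬝ᵥ q = star q ⬝ᵥ x := by
    rw [← hx, ← star_dotProduct_conjTranspose_mulVec, hP]
  linear_combination (-star z) * hstate + (-z) * hstate' + c * houtput + c * houtput' - hsymm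

variable {𝕜 : Type*} [RCLike 𝕜] [DecidableEq n] {A : Matrix n n 𝕜} {B : Matrix n m 𝕜}
  {C : Matrix o n 𝕜} {D : Matrix o m 𝕜} {P : Matrix n n 𝕜} {γ : ℝ}

theorem re_star_dotProduct_lt_of_boundedRealLMI (hγ : γ ≠ 0)
    (h : (boundedRealLMI A B C D P ((γ : 𝕜) ^ 2)).PosDef) {z : 𝕜} {x : n → 𝕜} {w : m → 𝕜}
    {y : o → 𝕜} (hAB : A *ᵥ x + B *ᵥ w = z • x) (hy : C *ᵥ x + D *ᵥ w = y)
    (hxw : x ≠ 0 ∨ w ≠ 0) :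
    RCLike.re (star y ⬝ᵥ y) <
      γ ^ 2 * ((1 - ‖z‖ ^ 2) * RCLike.re (star x ⬝ᵥ P⁻¹ *ᵥ x) + RCLike.re (star w ⬝ᵥ w)) := by
  have hP := posDef_of_boundedRealLMI_posDef h
  have hx : P *ᵥ (P⁻¹ *ᵥ x) = x := by
    rw [mulVec_mulVec, mul_nonsing_inv _ ((isUnit_iff_isUnit_det P).mp hP.isUnit), one_mulVec]
  set c : 𝕜 := ((-(γ ^ 2)⁻¹ : ℝ) : 𝕜)
  have hξ : Sum.elim (Sum.elim (-z • P⁻¹ *ᵥ x) (P⁻¹ *ᵥ x)) (Sum.elim w (c • y)) ≠ 0 := by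
    intro h0
    rcases hxw with hx0 | hw0
    · refine hx0 ?_
      rw [← hx, show P⁻¹ *ᵥ x = 0 from funext fun i ↦ congrFun h0 (.inl (.inr i)), mulVec_zero]
    · exact hw0 (funext fun i ↦ congrFun h0 (.inr (.inl i)))
  have hpos := h.re_dotProduct_pos hξ
  rw [star_dotProduct_boundedRealLMI_mulVec hP.isHermitian (RCLike.conj_ofReal _) hx hAB hy]
    at hpos
  have hz : 1 - star z * z = ((1 - ‖z‖ ^ 2 : ℝ) : 𝕜) := by
    rw [RCLike.star_def, RCLike.conj_mul]; push_cast; ring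
  have hc : 2 * c + (γ : 𝕜) ^ 2 * c ^ 2 = ((-(γ ^ 2)⁻¹ : ℝ) : 𝕜) := by
    simp only [c]; push_cast; field_simp; ring
  rwa [hz, hc, map_add, map_add, RCLike.re_ofReal_mul, RCLike.re_ofReal_mul, neg_mul,
    ← sub_eq_add_neg, sub_pos, inv_mul_lt_iff₀ (by positivity)] at hpos

theorem norm_lt_one_of_boundedRealLMI (hγ : γ ≠ 0)
    (h : (boundedRealLMI A B C D P ((γ : 𝕜) ^ 2)).PosDef) {μ : 𝕜} {v : n → 𝕜} (hv : v ≠ 0)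
    (hAv : A *ᵥ v = μ • v) : ‖μ‖ < 1 := by
  have hdiss := re_star_dotProduct_lt_of_boundedRealLMI hγ h (w := 0) (by simpa using hAv) rfl
    (.inl hv)
  simp only [mulVec_zero, star_zero, dotProduct_zero, map_zero, add_zero] at hdiss
  have hy := (PosSemidef.one : (1 : Matrix o o 𝕜).PosSemidef).re_dotProduct_nonneg (C *ᵥ v)
  rw [one_mulVec] at hy
  have hV := (posDef_of_boundedRealLMI_posDef h).inv.re_dotProduct_pos hv
  have hμ : 0 < 1 - ‖μ‖ ^ 2 :=
    pos_of_mul_pos_left (pos_of_mul_pos_right (hy.trans_lt hdiss) (sq_nonneg γ)) hV.le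
  nlinarith [norm_nonneg μ]

theorem re_star_dotProduct_transfer_le_of_boundedRealLMI (hγ : γ ≠ 0)
    (h : (boundedRealLMI A B C D P ((γ : 𝕜) ^ 2)).PosDef) {z : 𝕜} (hz : ‖z‖ = 1)
    (hu : IsUnit (z • 1 - A)) (w : m → 𝕜) :
    RCLike.re (star ((C * (z • 1 - A)⁻¹ * B + D) *ᵥ w) ⬝ᵥ (C * (z • 1 - A)⁻¹ * B + D) *ᵥ w) ≤
      γ ^ 2 * RCLike.re (star w ⬝ᵥ w) := by
  rcases eq_or_ne w 0 with rfl | hw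
  · simp
  set x := (z • 1 - A)⁻¹ *ᵥ B *ᵥ w
  have hx : (z • 1 - A) *ᵥ x = B *ᵥ w := by
    rw [mulVec_mulVec, mul_nonsing_inv _ ((isUnit_iff_isUnit_det _).mp hu), one_mulVec]
  have hAB : A *ᵥ x + B *ᵥ w = z • x := by
    rw [← hx, sub_mulVec, smul_mulVec, one_mulVec]; abel
  have hy : C *ᵥ x + D *ᵥ w = (C * (z • 1 - A)⁻¹ * B + D) *ᵥ w := by
    simp only [x, add_mulVec, mulVec_mulVec, Matrix.mul_assoc]
  simpa [hz] using (re_star_dotProduct_lt_of_boundedRealLMI hγ h hAB hy (.inr hw)).le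

end BoundedRealLMI

theorem Matrix.exists_mulVec_eq_smul_of_mem_spectrum_s10 {n K : Type*} [Fintype n] [DecidableEq n]
    [Field K] {A : Matrix n n K} {μ : K} (hμ : μ ∈ spectrum K A) : ∃ v ≠ 0, A *ᵥ v = μ • v := by
  rw [← spectrum_toLin', ← Module.End.hasEigenvalue_iff_mem_spectrum] at hμ
  obtain ⟨v, hv⟩ := hμ.exists_hasEigenvector
  exact ⟨v, hv.2, by simpa using hv.apply_eq_smul⟩

theorem EuclideanSpace.norm_sq_eq_re_star_dotProduct {𝕜 ι : Type*} [RCLike 𝕜] [Fintype ι]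
    (x : EuclideanSpace 𝕜 ι) : ‖x‖ ^ 2 = RCLike.re (star x.ofLp ⬝ᵥ x.ofLp) := by
  rw [@norm_sq_eq_re_inner 𝕜, EuclideanSpace.inner_eq_star_dotProduct, dotProduct_comm]

theorem specNorm_le_of_forall_re_star_dotProduct_le {m n : Type*} [Fintype m] [Fintype n]
    [DecidableEq n] {M : Matrix m n ℂ} {γ : ℝ} (hγ : 0 ≤ γ)
    (h : ∀ v, (star (M *ᵥ v) ⬝ᵥ M *ᵥ v).re ≤ γ ^ 2 * (star v ⬝ᵥ v).re) : specNorm M ≤ γ := by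
  refine ContinuousLinearMap.opNorm_le_bound _ hγ fun v ↦ ?_
  refine (pow_le_pow_iff_left₀ (norm_nonneg _) (by positivity) two_ne_zero).mp ?_
  rw [mul_pow, EuclideanSpace.norm_sq_eq_re_star_dotProduct,
    EuclideanSpace.norm_sq_eq_re_star_dotProduct]
  exact h v.ofLp

theorem discrete_hinf_bound_of_lmi_general {N m o : ℕ} (γ : ℝ) (hγ : 0 < γ)
    (A : Matrix (Fin N) (Fin N) ℝ) (B : Matrix (Fin N) (Fin m) ℝ)
    (C : Matrix (Fin o) (Fin N) ℝ) (D : Matrix (Fin o) (Fin m) ℝ)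
    (P : Matrix (Fin N) (Fin N) ℝ)
    (h : (fromBlocks
        (fromBlocks P (A * P) (P * Aᵀ) P)
        (fromBlocks B 0 0 (P * Cᵀ))
        (fromBlocks Bᵀ 0 0 (C * P))
        (fromBlocks (1 : Matrix (Fin m) (Fin m) ℝ) Dᵀ D
          (γ ^ 2 • (1 : Matrix (Fin o) (Fin o) ℝ)))).PosDef) :
    (∀ μ ∈ spectrum ℂ (A.map (Complex.ofReal ·)), ‖μ‖ < 1) ∧
    (∀ z : ℂ, ‖z‖ = 1 →
      IsUnit (z • (1 : Matrix (Fin N) (Fin N) ℂ) - A.map (Complex.ofReal ·)) ∧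
      specNorm ((C.map (Complex.ofReal ·)) *
          (z • (1 : Matrix (Fin N) (Fin N) ℂ) - A.map (Complex.ofReal ·))⁻¹ *
          (B.map (Complex.ofReal ·)) + D.map (Complex.ofReal ·)) ≤ γ) := by
  have hreal : (boundedRealLMI A B C D P (γ ^ 2)).PosDef := by simpa [boundedRealLMI] using h
  have hLMI : (boundedRealLMI (A.map (↑)) (B.map (↑)) (C.map (↑)) (D.map (↑)) (P.map (↑))
      ((γ : ℂ) ^ 2)).PosDef := by
    have hmap := boundedRealLMI_map Complex.ofRealHom (fun r ↦ (Complex.conj_ofReal r).symm)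
      A B C D P (γ ^ 2)
    simp only [Complex.ofRealHom_eq_coe, Complex.ofReal_pow] at hmap
    exact hmap ▸ hreal.map_ofReal_s10
  have hspec : ∀ μ ∈ spectrum ℂ (A.map (Complex.ofReal ·)), ‖μ‖ < 1 := fun μ hμ ↦
    let ⟨_, hv, hAv⟩ := exists_mulVec_eq_smul_of_mem_spectrum_s10 hμ
    norm_lt_one_of_boundedRealLMI hγ.ne' hLMI hv hAv
  refine ⟨hspec, fun z hz ↦ ?_⟩
  have hu : IsUnit (z • 1 - A.map (Complex.ofReal ·)) := by
    rw [← Algebra.algebraMap_eq_smul_one, ← spectrum.notMem_iff]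
    exact fun hz' ↦ (hspec z hz').ne hz
  exact ⟨hu, specNorm_le_of_forall_re_star_dotProduct_le hγ.le
    (re_star_dotProduct_transfer_le_of_boundedRealLMI hγ.ne' hLMI hz hu)⟩

/-- Discrete-time bounded real lemma (sufficiency): if `P` is symmetric and the 4×4
block matrix `[[P, AP, B, 0], [PAᵀ, P, 0, PCᵀ], [Bᵀ, 0, I, Dᵀ], [0, CP, D, γ²I]]` is
positive definite, then every eigenvalue of `A` has modulus `< 1`, and for every `z` on
the unit circle the matrix `zI − A` is invertible with `‖C (zI − A)⁻¹ B + D‖ ≤ γ`. -/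
theorem discrete_hinf_bound_of_lmi {N m o : ℕ} (γ : ℝ) (hγ : 0 < γ)
    (A : Matrix (Fin N) (Fin N) ℝ) (B : Matrix (Fin N) (Fin m) ℝ)
    (C : Matrix (Fin o) (Fin N) ℝ) (D : Matrix (Fin o) (Fin m) ℝ)
    (P : Matrix (Fin N) (Fin N) ℝ) (hPsymm : Pᵀ = P)
    (h : (fromBlocks
        (fromBlocks P (A * P) (P * Aᵀ) P)
        (fromBlocks B 0 0 (P * Cᵀ))
        (fromBlocks Bᵀ 0 0 (C * P))
        (fromBlocks (1 : Matrix (Fin m) (Fin m) ℝ) Dᵀ D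
          (γ ^ 2 • (1 : Matrix (Fin o) (Fin o) ℝ)))).PosDef) :
    (∀ μ ∈ spectrum ℂ (A.map (Complex.ofReal ·)), ‖μ‖ < 1) ∧
    (∀ z : ℂ, ‖z‖ = 1 →
      IsUnit (z • (1 : Matrix (Fin N) (Fin N) ℂ) - A.map (Complex.ofReal ·)) ∧
      specNorm ((C.map (Complex.ofReal ·)) *
          (z • (1 : Matrix (Fin N) (Fin N) ℂ) - A.map (Complex.ofReal ·))⁻¹ *
          (B.map (Complex.ofReal ·)) + D.map (Complex.ofReal ·)) ≤ γ) :=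
  discrete_hinf_bound_of_lmi_general γ hγ A B C D P h
end
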